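/- Let m ≥ 4 and k ≥ 2. Among the k-uniform supertrees with m edges and diameter 3, consisting of a loose path v_1,e_1,v_2,e_2,v_3,e_3,v_4 with a ≥ 1 pendent edges attached at v_2 and b ≥ 1 pendent edges attached at v_3 (a + b = m − 3), the signless Laplacian spectral radius is strictly maximized when {a,b} = {m−4, 1} or the supertree is S_1(m,3,k) (all m−3 pendent edges at v_2). More precisely: if a, b ≥ 2 and x is the principal eigenvector of Q(G) with x_{v_2} ≥ x_{v_3}, then moving b−1 pendent edges from v_3 to v_2 strictly increases the signless Laplacian spectral radius. -/

import Mathlib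

open scoped Classical BigOperators

namespace SLT

variable {V : Type*}

/-- A hypergraph (edge set over vertex type `V`) is `k`-uniform if every edge has exactly `k` vertices. -/
def IsUniform (k : ℕ) (E : Finset (Finset V)) : Prop :=
  ∀ e ∈ E, e.card = k

/-- The degree of a vertex: the number of edges containing it. -/
noncomputable def degree (E : Finset (Finset V)) (v : V) : ℕ :=
  (E.filter (fun e => v ∈ e)).card

/-- `Chains vs es` : the alternating sequence of vertices `vs` and edges `es` forms a
walk, i.e. consecutive vertices both lie in the corresponding edge. -/
def Chains : List V → List (Finset V) → Prop
  | [_], [] => True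
  | u :: v :: vs, e :: es => u ∈ e ∧ v ∈ e ∧ Chains (v :: vs) es
  | _, _ => False

/-- A path in a hypergraph: distinct vertices, distinct edges, all edges in `E`,
with consecutive vertices in the corresponding edge. -/
def IsPath (E : Finset (Finset V)) (vs : List V) (es : List (Finset V)) : Prop :=
  vs.Nodup ∧ es.Nodup ∧ (∀ e ∈ es, e ∈ E) ∧ Chains vs es

/-- A hypergraph is connected if any two vertices are joined by a path. -/
def HConnected (E : Finset (Finset V)) : Prop :=
  ∀ u v : V, ∃ vs es, IsPath E vs es ∧ vs.head? = some u ∧ vs.getLast? = some v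

/-- A cycle: at least two distinct edges, distinct vertices, closing up at the first vertex. -/
def IsCycle (E : Finset (Finset V)) (vs : List V) (es : List (Finset V)) : Prop :=
  2 ≤ es.length ∧ vs.Nodup ∧ es.Nodup ∧ (∀ e ∈ es, e ∈ E) ∧
  ∃ u, vs.head? = some u ∧ Chains (vs ++ [u]) es

/-- A `k`-uniform supertree: connected and acyclic `k`-uniform hypergraph. -/
def IsSupertree (k : ℕ) (E : Finset (Finset V)) : Prop :=
  IsUniform k E ∧ HConnected E ∧ ∀ vs es, ¬ IsCycle E vs es

/-- The quadratic form `x^T (Q(G) x^{k-1})` of the signless Laplacian tensor of a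
`k`-uniform hypergraph. -/
noncomputable def qform (k : ℕ) (E : Finset (Finset V)) (x : V → ℝ) : ℝ :=
  ∑ e ∈ E, ((∑ i ∈ e, x i ^ k) + k * ∏ i ∈ e, x i)

/-- The `i`-th component of `Q(G) x^{k-1}` for a `k`-uniform hypergraph. -/
noncomputable def Qcomp (k : ℕ) (E : Finset (Finset V)) (x : V → ℝ) (i : V) : ℝ :=
  ∑ e ∈ E.filter (fun e => i ∈ e), (x i ^ (k-1) + ∏ j ∈ e.erase i, x j)

/-- The signless Laplacian spectral radius `q(G)`, via Qi's variational characterization: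
the supremum of the quadratic form over nonnegative vectors with `∑ x_v^k = 1`. -/
noncomputable def qrad [Fintype V] (k : ℕ) (E : Finset (Finset V)) : ℝ :=
  sSup {r | ∃ x : V → ℝ, (∀ v, 0 ≤ x v) ∧ (∑ v, x v ^ k) = 1 ∧ r = qform k E x}

/-- `x` is the principal eigenvector of `Q(G)`: positive, unit (`∑ x_v^k = 1`), and an
eigenvector for the eigenvalue `q(G)`. -/
def IsPrincipalEig [Fintype V] (k : ℕ) (E : Finset (Finset V)) (x : V → ℝ) : Prop :=
  (∀ v, 0 < x v) ∧ (∑ v, x v ^ k) = 1 ∧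
  ∀ i, Qcomp k E x i = qrad k E * x i ^ (k-1)

/-- A pendent edge at `v`: an edge containing `v` all of whose other vertices have
degree 1. -/
def IsPendentEdgeAt (E : Finset (Finset V)) (f : Finset V) (v : V) : Prop :=
  f ∈ E ∧ v ∈ f ∧ ∀ w ∈ f, w ≠ v → degree E w = 1

/-!
Since `x v₃ ≤ x v₂`, replacing `v₃` by `v₂` in the moved edges does not decrease the
quadratic form at `x`, so `q(E') ≥ qform E' x ≥ qform E x = q(E)`. If equality held, `x`
would maximize `qform E' y / ∑ y_v^k`, so the derivative in the coordinate `y_{v₂}` would vanish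
at `x`.
That derivative is `k ((Q(E') x^{k-1})_{v₂} - (Q(E) x^{k-1})_{v₂})`, which is positive because
`v₂` gained the moved edges. The pendent-edge hypotheses make the move legitimate: the moved edges
avoid `v₂` (which lies on two edges) and do not already belong to `E`.
-/

def edgeWeight (k : ℕ) (x : V → ℝ) (e : Finset V) : ℝ :=
  ∑ i ∈ e, x i ^ k + k * ∏ i ∈ e, x i

lemma qform_eq_sum_edgeWeight (k : ℕ) (E : Finset (Finset V)) (x : V → ℝ) :
    qform k E x = ∑ e ∈ E, edgeWeight k x e :=
  rfl

lemma qform_smul {k : ℕ} {E : Finset (Finset V)} (hE : IsUniform k E) (r : ℝ) (x : V → ℝ) :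
    qform k E (fun v => r * x v) = r ^ k * qform k E x := by
  unfold qform
  rw [Finset.mul_sum]
  refine Finset.sum_congr rfl fun e he => ?_
  rw [Finset.prod_mul_distrib, Finset.prod_const, hE e he, mul_add, Finset.mul_sum]
  simp only [mul_pow]
  ring

lemma sum_mul_Qcomp [Fintype V] {k : ℕ} (hk : k ≠ 0) {E : Finset (Finset V)}
    (hE : IsUniform k E) (x : V → ℝ) :
    ∑ v, x v * Qcomp k E x v = qform k E x := by
  have hvertex : ∀ v, x v * Qcomp k E x v
      = ∑ e ∈ E, if v ∈ e then x v ^ k + ∏ j ∈ e, x j else 0 := by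
    intro v
    rw [Qcomp, Finset.mul_sum, Finset.sum_filter]
    refine Finset.sum_congr rfl fun e _ => ?_
    split_ifs with hve
    · rw [mul_add, ← pow_succ', Nat.sub_add_cancel (Nat.one_le_iff_ne_zero.mpr hk),
        Finset.mul_prod_erase e x hve]
    · rfl
  simp only [hvertex]
  rw [Finset.sum_comm, qform]
  refine Finset.sum_congr rfl fun e he => ?_
  rw [← Finset.sum_filter, Finset.filter_univ_mem,
    Finset.sum_add_distrib, Finset.sum_const, hE e he, nsmul_eq_mul]

lemma qform_le_of_sum_pow_eq_one [Fintype V] {k : ℕ} (hk : k ≠ 0) (E : Finset (Finset V))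
    {x : V → ℝ} (hx0 : ∀ v, 0 ≤ x v) (hx1 : ∑ v, x v ^ k = 1) :
    qform k E x ≤ (1 + k) * E.card := by
  have hsum : ∀ e : Finset V, ∑ i ∈ e, x i ^ k ≤ 1 := fun e =>
    hx1 ▸ Finset.sum_le_sum_of_subset_of_nonneg (Finset.subset_univ e)
      fun i _ _ => pow_nonneg (hx0 i) k
  have hle1 : ∀ v, x v ≤ 1 := fun v =>
    (pow_le_one_iff_of_nonneg (hx0 v) hk).mp (by simpa using hsum {v})
  calc qform k E x ≤ ∑ _e ∈ E, (1 + (k : ℝ) * 1) := by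
        refine Finset.sum_le_sum fun e _ => add_le_add (hsum e) ?_
        gcongr
        exact Finset.prod_le_one (fun i _ => hx0 i) fun i _ => hle1 i
    _ = (1 + k) * E.card := by rw [Finset.sum_const, nsmul_eq_mul]; ring

lemma qform_le_qrad [Fintype V] {k : ℕ} (hk : k ≠ 0) (E : Finset (Finset V))
    {x : V → ℝ} (hx0 : ∀ v, 0 ≤ x v) (hx1 : ∑ v, x v ^ k = 1) :
    qform k E x ≤ qrad k E :=
  le_csSup ⟨(1 + k) * E.card, by
    rintro r ⟨y, hy0, hy1, rfl⟩
    exact qform_le_of_sum_pow_eq_one hk E hy0 hy1⟩ ⟨x, hx0, hx1, rfl⟩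

lemma qform_le_qrad_mul_sum_pow [Fintype V] {k : ℕ} (hk : k ≠ 0) {E : Finset (Finset V)}
    (hE : IsUniform k E) {y : V → ℝ} (hy0 : ∀ v, 0 ≤ y v) (hy : 0 < ∑ v, y v ^ k) :
    qform k E y ≤ qrad k E * ∑ v, y v ^ k := by
  set S := ∑ v, y v ^ k
  set r : ℝ := S⁻¹ ^ (k⁻¹ : ℝ)
  have hrk : r ^ k = S⁻¹ := Real.rpow_inv_natCast_pow (inv_nonneg.mpr hy.le) hk
  have hr0 : 0 ≤ r := Real.rpow_nonneg (inv_nonneg.mpr hy.le) _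
  have hry := qform_le_qrad hk E (x := fun v => r * y v) (fun v => mul_nonneg hr0 (hy0 v))
    (by simp only [mul_pow, ← Finset.mul_sum, hrk]; exact inv_mul_cancel₀ hy.ne')
  rw [qform_smul hE, hrk, inv_mul_le_iff₀ hy, mul_comm] at hry
  exact hry

lemma qform_eq_qrad [Fintype V] {k : ℕ} (hk : k ≠ 0) {E : Finset (Finset V)}
    (hE : IsUniform k E) {x : V → ℝ} (hx : IsPrincipalEig k E x) :
    qform k E x = qrad k E := by
  obtain ⟨-, hx1, hQ⟩ := hx
  rw [← sum_mul_Qcomp hk hE]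
  calc ∑ v, x v * Qcomp k E x v = ∑ v, qrad k E * x v ^ k := by
        refine Finset.sum_congr rfl fun v _ => ?_
        rw [hQ, mul_left_comm, ← pow_succ', Nat.sub_add_cancel (Nat.one_le_iff_ne_zero.mpr hk)]
    _ = qrad k E := by rw [← Finset.mul_sum, hx1, mul_one]

section Update

variable [DecidableEq V]

lemma edgeWeight_update {k : ℕ} (x : V → ℝ) {u : V} {e : Finset V} (hue : u ∈ e) (s : ℝ) :
    edgeWeight k (Function.update x u s) e
      = (s ^ k + ∑ i ∈ e.erase u, x i ^ k) + k * (s * ∏ i ∈ e.erase u, x i) := by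
  have hother : ∀ i ∈ e.erase u, Function.update x u s i = x i := fun i hi =>
    Function.update_of_ne (Finset.ne_of_mem_erase hi) _ _
  rw [edgeWeight, ← Finset.add_sum_erase _ _ hue, ← Finset.mul_prod_erase _ _ hue,
    Function.update_self,
    Finset.sum_congr rfl fun i hi => by rw [hother i hi], Finset.prod_congr rfl hother]

lemma edgeWeight_update_of_notMem {k : ℕ} (x : V → ℝ) {u : V} {e : Finset V} (hue : u ∉ e)
    (s : ℝ) : edgeWeight k (Function.update x u s) e = edgeWeight k x e := by
  have hother : ∀ i ∈ e, Function.update x u s i = x i := fun i hi =>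
    Function.update_of_ne (ne_of_mem_of_not_mem hi hue) _ _
  rw [edgeWeight, edgeWeight, Finset.sum_congr rfl fun i hi => by rw [hother i hi],
    Finset.prod_congr rfl hother]

lemma Qcomp_eq_sum_ite (k : ℕ) (E : Finset (Finset V)) (x : V → ℝ) (u : V) :
    Qcomp k E x u
      = ∑ e ∈ E, if u ∈ e then x u ^ (k - 1) + ∏ j ∈ e.erase u, x j else 0 := by
  unfold Qcomp
  rw [Finset.sum_filter]
  congr!

lemma hasDerivAt_qform_update (k : ℕ) (E : Finset (Finset V)) (x : V → ℝ) (u : V) :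
    HasDerivAt (fun s => qform k E (Function.update x u s)) (k * Qcomp k E x u) (x u) := by
  have hedge : ∀ e ∈ E, HasDerivAt (fun s => edgeWeight k (Function.update x u s) e)
      (if u ∈ e then k * (x u ^ (k - 1) + ∏ j ∈ e.erase u, x j) else 0) (x u) := by
    intro e _
    split_ifs with hue
    · simp only [edgeWeight_update x hue]
      exact (((hasDerivAt_pow k (x u)).add_const _).add
        ((hasDerivAt_mul_const _).const_mul (k : ℝ))).congr_deriv (by ring)
    · simp only [edgeWeight_update_of_notMem x hue]
      exact hasDerivAt_const _ _
  refine (HasDerivAt.fun_sum hedge).congr_deriv ?_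
  rw [Qcomp_eq_sum_ite, Finset.mul_sum]
  exact Finset.sum_congr rfl fun e _ => by split_ifs <;> simp

lemma hasDerivAt_sum_pow_update [Fintype V] (k : ℕ) (x : V → ℝ) (u : V) :
    HasDerivAt (fun s => ∑ v, Function.update x u s v ^ k) (k * x u ^ (k - 1)) (x u) := by
  have hsplit : ∀ s,
      ∑ v, Function.update x u s v ^ k = s ^ k + ∑ v ∈ Finset.univ.erase u, x v ^ k := by
    intro s
    rw [← Finset.add_sum_erase _ _ (Finset.mem_univ u), Function.update_self]
    congr 1
    exact Finset.sum_congr rfl fun v hv => by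
      rw [Function.update_of_ne (Finset.ne_of_mem_erase hv)]
  simp only [hsplit]
  exact (hasDerivAt_pow k (x u)).add_const _

end Update

section MoveEdges

variable [DecidableEq V] {E B : Finset (Finset V)} {u v : V}

def moveEdges (E B : Finset (Finset V)) (v u : V) : Finset (Finset V) :=
  (E \ B) ∪ B.image fun f => insert u (f.erase v)

lemma erase_insert_erase {f : Finset V} (huf : u ∉ f) :
    (insert u (f.erase v)).erase u = f.erase v :=
  Finset.erase_insert fun h => huf (Finset.mem_of_mem_erase h)

structure CanMoveEdges (E B : Finset (Finset V)) (v u : V) : Prop where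
  subset : B ⊆ E
  mem : ∀ f ∈ B, v ∈ f
  notMem : ∀ f ∈ B, u ∉ f
  moved_notMem : ∀ f ∈ B, insert u (f.erase v) ∉ E

lemma CanMoveEdges.sum_moveEdges (h : CanMoveEdges E B v u) (F : Finset V → ℝ) :
    ∑ e ∈ moveEdges E B v u, F e
      = ∑ e ∈ E, F e + ∑ f ∈ B, (F (insert u (f.erase v)) - F f) := by
  have hinj : Set.InjOn (fun f => insert u (f.erase v)) (B : Set (Finset V)) := by
    intro f hf f' hf' hff'
    simpa only [erase_insert_erase (h.notMem f hf), erase_insert_erase (h.notMem f' hf'),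
      Finset.insert_erase (h.mem f hf), Finset.insert_erase (h.mem f' hf')]
      using congrArg (fun g => insert v (g.erase u)) hff'
  have hdisj : Disjoint (E \ B) (B.image fun f => insert u (f.erase v)) := by
    rw [Finset.disjoint_right]
    rintro _ he hmem
    obtain ⟨f, hf, rfl⟩ := Finset.mem_image.mp he
    exact h.moved_notMem f hf (Finset.mem_sdiff.mp hmem).1
  rw [moveEdges, Finset.sum_union hdisj, Finset.sum_image hinj, Finset.sum_sub_distrib,
    ← Finset.sum_sdiff h.subset]
  ring

lemma CanMoveEdges.qform_le_qform_moveEdges (h : CanMoveEdges E B v u) {k : ℕ} {x : V → ℝ}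
    (hx0 : ∀ w, 0 ≤ x w) (hxvu : x v ≤ x u) :
    qform k E x ≤ qform k (moveEdges E B v u) x := by
  rw [qform_eq_sum_edgeWeight, qform_eq_sum_edgeWeight, h.sum_moveEdges,
    le_add_iff_nonneg_right]
  refine Finset.sum_nonneg fun f hf => ?_
  have hu : u ∉ f.erase v := fun h' => h.notMem f hf (Finset.mem_of_mem_erase h')
  rw [edgeWeight, edgeWeight, Finset.sum_insert hu, Finset.prod_insert hu,
    ← Finset.add_sum_erase _ _ (h.mem f hf),
    ← Finset.mul_prod_erase _ _ (h.mem f hf)]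
  have hP : 0 ≤ ∏ i ∈ f.erase v, x i := Finset.prod_nonneg fun i _ => hx0 i
  have hpow : x v ^ k ≤ x u ^ k := pow_le_pow_left₀ (hx0 v) hxvu k
  have hprod : 0 ≤ (k : ℝ) * (x u - x v) * ∏ i ∈ f.erase v, x i :=
    mul_nonneg (mul_nonneg k.cast_nonneg (sub_nonneg.mpr hxvu)) hP
  linarith

lemma CanMoveEdges.Qcomp_moveEdges (h : CanMoveEdges E B v u) (k : ℕ) (x : V → ℝ) :
    Qcomp k (moveEdges E B v u) x u
      = Qcomp k E x u + ∑ f ∈ B, (x u ^ (k - 1) + ∏ j ∈ f.erase v, x j) := by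
  rw [Qcomp_eq_sum_ite, Qcomp_eq_sum_ite, h.sum_moveEdges]
  refine congrArg _ (Finset.sum_congr rfl fun f hf => ?_)
  rw [if_pos (Finset.mem_insert_self _ _), if_neg (h.notMem f hf), sub_zero,
    erase_insert_erase (h.notMem f hf)]

lemma IsUniform.moveEdges {k : ℕ} (hE : IsUniform k E) (hBE : B ⊆ E)
    (hvB : ∀ f ∈ B, v ∈ f) (huB : ∀ f ∈ B, u ∉ f) :
    IsUniform k (moveEdges E B v u) := by
  intro e he
  rcases Finset.mem_union.mp he with h | h
  · exact hE e (Finset.mem_sdiff.mp h).1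
  · obtain ⟨f, hf, rfl⟩ := Finset.mem_image.mp h
    have hf1 : 1 ≤ f.card := Finset.card_pos.mpr ⟨v, hvB f hf⟩
    rw [Finset.card_insert_of_notMem fun h' => huB f hf (Finset.mem_of_mem_erase h'),
      Finset.card_erase_of_mem (hvB f hf), Nat.sub_add_cancel hf1, hE f (hBE hf)]

theorem CanMoveEdges.qrad_lt_qrad_moveEdges [Fintype V] (h : CanMoveEdges E B v u) {k : ℕ}
    (hk : k ≠ 0) (hE : IsUniform k E) {x : V → ℝ} (hx : IsPrincipalEig k E x)
    (hxvu : x v ≤ x u) (hB : B.Nonempty) :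
    qrad k E < qrad k (moveEdges E B v u) := by
  set E' := moveEdges E B v u
  obtain ⟨hxpos, hx1, hxeig⟩ := hx
  -- Otherwise `x u` is a local maximum of `ψ`, yet `ψ' (x u) = k (Qcomp E' - Qcomp E) x u > 0`.
  by_contra! hle
  set ψ : ℝ → ℝ := fun s =>
    qform k E' (Function.update x u s) - qrad k E * ∑ w, Function.update x u s w ^ k
  have hψu : 0 ≤ ψ (x u) := by
    simp only [ψ, Function.update_eq_self, hx1, mul_one, sub_nonneg]
    rw [← qform_eq_qrad hk hE ⟨hxpos, hx1, hxeig⟩]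
    exact h.qform_le_qform_moveEdges (fun w => (hxpos w).le) hxvu
  have hmax : IsLocalMax ψ (x u) := by
    filter_upwards [Ioi_mem_nhds (hxpos u)] with s hs
    have hy0 : ∀ w, 0 ≤ Function.update x u s w := fun w => by
      rcases eq_or_ne w u with rfl | hw
      · simpa using hs.le
      · simpa [Function.update_of_ne hw] using (hxpos w).le
    have hS : 0 < ∑ w, Function.update x u s w ^ k :=
      lt_of_lt_of_le (by simpa using pow_pos (Set.mem_Ioi.mp hs) k)
        (Finset.single_le_sum (fun w _ => pow_nonneg (hy0 w) k) (Finset.mem_univ u))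
    have := qform_le_qrad_mul_sum_pow hk (hE.moveEdges h.subset h.mem h.notMem) hy0 hS
    have := mul_le_mul_of_nonneg_right hle hS.le
    simp only [ψ] at hψu ⊢
    linarith
  have hderiv := hmax.hasDerivAt_eq_zero ((hasDerivAt_qform_update k E' x u).sub
    ((hasDerivAt_sum_pow_update k x u).const_mul (qrad k E)))
  have hQ : Qcomp k E x u < Qcomp k E' x u := by
    rw [h.Qcomp_moveEdges, lt_add_iff_pos_right]
    exact Finset.sum_pos (fun f _ => add_pos (pow_pos (hxpos u) _)
      (Finset.prod_pos fun j _ => hxpos j)) hB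
  have hk0 : (0 : ℝ) < k := by exact_mod_cast Nat.pos_of_ne_zero hk
  rw [hxeig u] at hQ
  exact (mul_pos hk0 (sub_pos.mpr hQ)).ne' (by linear_combination hderiv)

end MoveEdges

section Pendent

variable {E : Finset (Finset V)} {f : Finset V} {v : V}

lemma IsPendentEdgeAt.eq_of_mem {g : Finset V} {w : V} (hf : IsPendentEdgeAt E f v)
    (hg : g ∈ E) (hwf : w ∈ f) (hwg : w ∈ g) (hwv : w ≠ v) : f = g :=
  Finset.card_le_one.mp (hf.2.2 w hwf hwv).le f (Finset.mem_filter.mpr ⟨hf.1, hwf⟩) g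
    (Finset.mem_filter.mpr ⟨hg, hwg⟩)

lemma IsPendentEdgeAt.notMem_of_mem_of_mem {e₁ e₂ : Finset V} {u : V}
    (hf : IsPendentEdgeAt E f v) (he₁ : e₁ ∈ E) (he₂ : e₂ ∈ E) (hne : e₁ ≠ e₂)
    (hu₁ : u ∈ e₁) (hu₂ : u ∈ e₂) (huv : u ≠ v) : u ∉ f := fun huf =>
  hne ((hf.eq_of_mem he₁ huf hu₁ huv).symm.trans (hf.eq_of_mem he₂ huf hu₂ huv))

variable [DecidableEq V]

lemma IsPendentEdgeAt.insert_erase_notMem {k : ℕ} (hk : 2 ≤ k) (hE : IsUniform k E)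
    {u : V} (hf : IsPendentEdgeAt E f v) (huf : u ∉ f) : insert u (f.erase v) ∉ E := by
  intro hmem
  obtain ⟨w, hw⟩ : (f.erase v).Nonempty := by
    rw [← Finset.card_pos, Finset.card_erase_of_mem hf.2.1, hE f hf.1]
    omega
  have hfg := hf.eq_of_mem hmem (Finset.mem_of_mem_erase hw) (Finset.mem_insert_of_mem hw)
    (Finset.ne_of_mem_erase hw)
  exact huf (hfg ▸ Finset.mem_insert_self u _)

lemma canMoveEdges_of_isPendentEdgeAt {k : ℕ} (hk : 2 ≤ k) (hE : IsUniform k E)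
    {B : Finset (Finset V)} {u : V} (hB : ∀ f ∈ B, IsPendentEdgeAt E f v)
    (hu : ∀ f ∈ B, u ∉ f) : CanMoveEdges E B v u where
  subset f hf := (hB f hf).1
  mem f hf := (hB f hf).2.1
  notMem := hu
  moved_notMem f hf := (hB f hf).insert_erase_notMem hk hE (hu f hf)

end Pendent

theorem diameter_three_move_general (k b : ℕ) (hk : 2 ≤ k)
    (hb : 2 ≤ b)
    {V : Type*} [Fintype V] [DecidableEq V]
    (E : Finset (Finset V)) (hG : IsSupertree k E)
    (v2 v3 : V) (e1 e2 : Finset V)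
    (he1 : e1 ∈ E) (he2 : e2 ∈ E)
    (h12 : e1 ∩ e2 = {v2}) (hv23 : v2 ≠ v3)
    (B : Finset (Finset V))
    (hB : ∀ f ∈ B, IsPendentEdgeAt E f v3)
    (x : V → ℝ) (hx : IsPrincipalEig k E x) (hx23 : x v3 ≤ x v2)
    (B' : Finset (Finset V)) (hB' : B' ⊆ B) (hB'card : B'.card = b - 1)
    (E' : Finset (Finset V))
    (hE' : E' = (E \ B') ∪ B'.image (fun f => insert v2 (f.erase v3))) :
    qrad k E < qrad k E' := by
  have hE : IsUniform k E := hG.1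
  have hv2 : v2 ∈ e1 ∧ v2 ∈ e2 := Finset.mem_inter.mp (h12 ▸ Finset.mem_singleton_self v2)
  have he12 : e1 ≠ e2 := by
    rintro rfl
    have hcard := hE e1 he1
    rw [← Finset.inter_self e1, h12, Finset.card_singleton] at hcard
    omega
  have hB'pend : ∀ f ∈ B', IsPendentEdgeAt E f v3 := fun f hf => hB f (hB' hf)
  have hmove : CanMoveEdges E B' v3 v2 := canMoveEdges_of_isPendentEdgeAt hk hE hB'pend
    fun f hf => (hB'pend f hf).notMem_of_mem_of_mem he1 he2 he12 hv2.1 hv2.2 hv23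
  subst hE'
  exact hmove.qrad_lt_qrad_moveEdges (by omega) hE hx hx23 (Finset.card_pos.mp (by omega))

/-- in a diameter-3 supertree consisting of a loose path of length 3
with `a ≥ 2` pendent edges at `v₂` and `b ≥ 2` pendent edges at `v₃`, if `x` is the
principal eigenvector with `x_{v₂} ≥ x_{v₃}`, then moving `b-1` pendent edges from
`v₃` to `v₂` strictly increases the signless Laplacian spectral radius. -/
theorem diameter_three_move (k m a b : ℕ) (hm : 4 ≤ m) (hk : 2 ≤ k)
    (ha : 2 ≤ a) (hb : 2 ≤ b) (hab : a + b = m - 3)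
    {V : Type*} [Fintype V] [DecidableEq V]
    (E : Finset (Finset V)) (hG : IsSupertree k E) (hm' : E.card = m)
    (v1 v2 v3 v4 : V) (e1 e2 e3 : Finset V)
    (he1 : e1 ∈ E) (he2 : e2 ∈ E) (he3 : e3 ∈ E)
    (h12 : e1 ∩ e2 = {v2}) (h23 : e2 ∩ e3 = {v3}) (h13 : e1 ∩ e3 = ∅)
    (hv1 : v1 ∈ e1 ∧ v1 ∉ e2) (hv4 : v4 ∈ e3 ∧ v4 ∉ e2) (hv23 : v2 ≠ v3)
    (A B : Finset (Finset V))
    (hA : ∀ f ∈ A, IsPendentEdgeAt E f v2) (hB : ∀ f ∈ B, IsPendentEdgeAt E f v3)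
    (hAcard : A.card = a) (hBcard : B.card = b)
    (hE : E = {e1, e2, e3} ∪ A ∪ B)
    (hAe : ∀ f ∈ A, f ≠ e1 ∧ f ≠ e2 ∧ f ≠ e3) (hBe : ∀ f ∈ B, f ≠ e1 ∧ f ≠ e2 ∧ f ≠ e3)
    (hAB : Disjoint A B)
    (x : V → ℝ) (hx : IsPrincipalEig k E x) (hx23 : x v3 ≤ x v2)
    (B' : Finset (Finset V)) (hB' : B' ⊆ B) (hB'card : B'.card = b - 1)
    (E' : Finset (Finset V))
    (hE' : E' = (E \ B') ∪ B'.image (fun f => insert v2 (f.erase v3))) :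
    qrad k E < qrad k E' :=
  diameter_three_move_general k b hk hb E hG v2 v3 e1 e2 he1 he2 h12 hv23 B hB x hx hx23 B' hB'
    hB'card E' hE'

end SLT
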